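/- Let k > 0 and K ⊂ ℝ³ compact nonempty. For the gradient in y, sup_{|x|=r} sup_{y∈K} |x| · | ∇_y ( e^{ik|x-y|}/|x-y| − (e^{ik|x|}/|x|) e^{−ik x̂·y} ) | → 0 as r → ∞. -/

import Mathlib

/-!
Write `d = |x - y|`, `u = (x - y) / d` and `x̂ = x / |x|`. The gradient in `y` is `α u + β x̂`
with `α = (1/d - ik) e^{ikd} / d` and `β = ik e^{ik(|x| - x̂·y)} / |x|`, so its norm is at most
`|α + β| + |β| |x̂ - u|`. For `|x| > 2|y|` we have `d ≥ |x| / 2`, `|d - |x|| ≤ |y|`,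
`0 ≤ d - (|x| - x̂·y) ≤ |y|² / |x|` and `|x̂ - u| ≤ 2|y| / |x|`; since `t ↦ e^{ikt}` is
`|k|`-Lipschitz, both terms are `O((1 + |k||y|)² / |x|²)`, so `|x|` times the gradient is
`O(1 / |x|)` uniformly for `y` in a bounded set.
-/

open Complex

theorem norm_mul_norm_normalize_sub_normalize_le {V : Type*} [NormedAddCommGroup V]
    [NormedSpace ℝ V] (a b : V) :
    ‖b‖ * ‖NormedSpace.normalize a - NormedSpace.normalize b‖ ≤ 2 * ‖a - b‖ := by
  rcases eq_or_ne b 0 with rfl | hb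
  · simp
  have hidentity : ‖b‖ • (NormedSpace.normalize a - NormedSpace.normalize b) =
      ((‖b‖ - ‖a‖) / ‖a‖) • a + (a - b) := by
    rcases eq_or_ne a 0 with rfl | ha
    · simp [NormedSpace.normalize, smul_smul, norm_ne_zero_iff.mpr hb]
    simp only [NormedSpace.normalize, smul_sub, smul_smul]
    rw [mul_inv_cancel₀ (norm_ne_zero_iff.mpr hb), sub_div, div_self (norm_ne_zero_iff.mpr ha)]
    module
  have hcoef : ‖((‖b‖ - ‖a‖) / ‖a‖) • a‖ ≤ ‖a - b‖ := by
    rcases eq_or_ne a 0 with rfl | ha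
    · simp
    rw [norm_smul, norm_div, norm_norm, Real.norm_eq_abs,
      div_mul_cancel₀ _ (norm_ne_zero_iff.mpr ha), abs_sub_comm]
    exact abs_norm_sub_norm_le a b
  calc ‖b‖ * ‖NormedSpace.normalize a - NormedSpace.normalize b‖
      = ‖((‖b‖ - ‖a‖) / ‖a‖) • a + (a - b)‖ := by rw [← hidentity, norm_smul, norm_norm]
    _ ≤ ‖a - b‖ + ‖a - b‖ := (norm_add_le _ _).trans (add_le_add_left hcoef _)
    _ = 2 * ‖a - b‖ := by ring

theorem norm_innerSL_smulRight_add_le {E F : Type*} [NormedAddCommGroup E]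
    [InnerProductSpace ℝ E] [NormedAddCommGroup F] [NormedSpace ℝ F] (u w : E) (α β : F) :
    ‖(innerSL ℝ u).smulRight α + (innerSL ℝ w).smulRight β‖ ≤
      ‖α + β‖ * ‖u‖ + ‖β‖ * ‖w - u‖ := by
  have hsplit : (innerSL ℝ u).smulRight α + (innerSL ℝ w).smulRight β =
      (innerSL ℝ u).smulRight (α + β) + (innerSL ℝ (w - u)).smulRight β := by
    ext v
    simp only [add_apply, ContinuousLinearMap.smulRight_apply,
      innerSL_apply_apply, inner_sub_left, smul_add, sub_smul]
    abel
  rw [hsplit]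
  refine (norm_add_le _ _).trans ?_
  simp only [ContinuousLinearMap.norm_smulRight_apply, innerSL_apply_norm, mul_comm, le_refl]

theorem norm_exp_I_mul_ofReal_mul_ofReal (k t : ℝ) : ‖cexp (I * k * t)‖ = 1 := by
  simp [Complex.norm_exp]

theorem norm_exp_I_mul_sub_exp_I_mul_le (k a b : ℝ) :
    ‖cexp (I * k * a) - cexp (I * k * b)‖ ≤ |k| * |a - b| := by
  have h : cexp (I * k * a) - cexp (I * k * b) =
      cexp (I * ↑(k * b)) * (cexp (I * ↑(k * (a - b))) - 1) := by
    rw [mul_sub, ← Complex.exp_add]; push_cast; ring_nf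
  rw [h, norm_mul, norm_exp_I_mul_ofReal, one_mul, ← abs_mul, ← Real.norm_eq_abs]
  exact Real.norm_exp_I_mul_ofReal_sub_one_le

theorem hasDerivAt_exp_I_mul_div (k : ℝ) {t : ℝ} (ht : t ≠ 0) :
    HasDerivAt (fun s : ℝ => cexp (I * k * s) / s)
      ((I * k - (t : ℂ)⁻¹) * cexp (I * k * t) / t) t := by
  have ht' : (t : ℂ) ≠ 0 := ofReal_ne_zero.mpr ht
  have hcoe : HasDerivAt (fun s : ℝ => (s : ℂ)) 1 t := hasDerivAt_id t |>.ofReal_comp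
  refine ((hcoe.const_mul (I * k)).cexp.div hcoe ht').congr_deriv ?_
  field_simp

section InnerProductSpace

variable {E : Type*} [NormedAddCommGroup E] [InnerProductSpace ℝ E]

theorem norm_mul_abs_norm_sub_sub_inner_normalize_le {x y : E} (h : 2 * ‖y‖ ≤ ‖x‖) :
    ‖x‖ * |‖x - y‖ - (‖x‖ - inner ℝ (NormedSpace.normalize x) y)| ≤ ‖y‖ ^ 2 := by
  set p := inner ℝ (NormedSpace.normalize x) y
  have hp : |p| ≤ ‖y‖ := by
    rcases eq_or_ne x 0 with rfl | hx
    · simp [p, NormedSpace.normalize]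
    simpa [p, NormedSpace.norm_normalize_eq_one_iff.mpr hx] using
      abs_real_inner_le_norm (NormedSpace.normalize x) y
  obtain ⟨hp_le, hp_ge⟩ := abs_le.mp hp
  have hdist_sq : ‖x - y‖ ^ 2 - (‖x‖ - p) ^ 2 = ‖y‖ ^ 2 - p ^ 2 := by
    have hxy : inner ℝ x y = ‖x‖ * p := by
      rw [← real_inner_smul_left, NormedSpace.norm_smul_normalize]
    rw [norm_sub_sq_real, hxy]; ring
  have hdist_lb : ‖x‖ - ‖y‖ ≤ ‖x - y‖ := norm_sub_norm_le x y
  have hnonneg : 0 ≤ ‖x - y‖ - (‖x‖ - p) := by nlinarith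
  rw [abs_of_nonneg hnonneg]
  nlinarith

theorem hasFDerivAt_norm_sub {x y : E} (h : x ≠ y) :
    HasFDerivAt (fun z => ‖x - z‖) (-innerSL ℝ (NormedSpace.normalize (x - y))) y := by
  have hsq := ((hasFDerivAt_id y).const_sub x).norm_sq.sqrt
    (pow_ne_zero 2 (norm_ne_zero_iff.mpr (sub_ne_zero.mpr h)))
  simp only [id, Real.sqrt_sq (norm_nonneg _)] at hsq
  convert hsq using 1
  ext v
  simp only [NormedSpace.normalize, map_smul, map_sub, neg_apply, smul_apply, sub_apply,
    coe_innerSL_apply, smul_eq_mul, one_div, mul_inv_rev, ContinuousLinearMap.comp_neg,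
    ContinuousLinearMap.comp_id, neg_sub, nsmul_eq_mul, Nat.cast_ofNat]
  ring

noncomputable def farfieldRemainder (k : ℝ) (x z : E) : ℂ :=
  cexp (I * k * ‖x - z‖) / (‖x - z‖ : ℂ) -
    cexp (I * k * ‖x‖) / (‖x‖ : ℂ) * cexp (-I * k * (inner ℝ (NormedSpace.normalize x) z : ℝ))

theorem hasFDerivAt_farfieldRemainder (k : ℝ) {x y : E} (h : x ≠ y) :
    HasFDerivAt (farfieldRemainder k x)
      ((innerSL ℝ (NormedSpace.normalize (x - y))).smulRight
          (((‖x - y‖ : ℂ)⁻¹ - I * k) * cexp (I * k * ‖x - y‖) / ‖x - y‖) +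
        (innerSL ℝ (NormedSpace.normalize x)).smulRight
          (I * k * cexp (I * k * ↑(‖x‖ - inner ℝ (NormedSpace.normalize x) y)) / ‖x‖)) y := by
  have hspherical :=
    (hasDerivAt_exp_I_mul_div k (norm_ne_zero_iff.mpr (sub_ne_zero.mpr h))).hasFDerivAt.comp y
      (hasFDerivAt_norm_sub h)
  have hcoe : HasDerivAt (fun s : ℝ => (s : ℂ)) 1 (inner ℝ (NormedSpace.normalize x) y) :=
    hasDerivAt_id _ |>.ofReal_comp
  have hplane := ((hcoe.const_mul (-I * k)).cexp.const_mul
    (cexp (I * k * ‖x‖) / (‖x‖ : ℂ))).hasFDerivAt.comp y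
      (innerSL ℝ (NormedSpace.normalize x)).hasFDerivAt
  refine (hspherical.sub hplane).congr_fderiv ?_
  ext v
  simp only [ContinuousLinearMap.comp_neg, neg_mul, mul_one, mul_neg, sub_apply, neg_apply,
    ContinuousLinearMap.comp_apply, coe_innerSL_apply, ContinuousLinearMap.toSpanSingleton_apply,
    real_smul, smul_neg, sub_neg_eq_add, ofReal_sub, add_apply, ContinuousLinearMap.smulRight_apply]
  rw [mul_sub, Complex.exp_sub, Complex.exp_neg]
  ring

theorem norm_farfieldRemainder_coeff_le (k : ℝ) {d q r s : ℝ} (hr : 0 < r) (hrd : r ≤ 2 * d)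
    (hrs : |r - d| ≤ s) (hq : r * |d - q| ≤ s ^ 2) :
    ‖((d : ℂ)⁻¹ - I * k) * cexp (I * k * d) / d + I * k * cexp (I * k * q) / r‖ ≤
      (4 + 2 * |k| * s + 2 * k ^ 2 * s ^ 2) / r ^ 2 := by
  have hd : 0 < d := by linarith
  have hd' : (d : ℂ) ≠ 0 := ofReal_ne_zero.mpr hd.ne'
  have hr' : (r : ℂ) ≠ 0 := ofReal_ne_zero.mpr hr.ne'
  have hsplit : ((d : ℂ)⁻¹ - I * k) * cexp (I * k * d) / d + I * k * cexp (I * k * q) / r =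
      cexp (I * k * d) / d ^ 2 - I * k * ((cexp (I * k * d) - cexp (I * k * q)) / d +
        cexp (I * k * q) * ((r - d) / (d * r) : ℝ)) := by
    push_cast
    field_simp
    ring
  have hinv : d⁻¹ ≤ 2 / r := by rw [inv_eq_one_div, div_le_div_iff₀ hd hr]; linarith
  have hdq : |d - q| ≤ s ^ 2 / r := by rw [le_div_iff₀ hr, mul_comm]; exact hq
  rw [hsplit]
  set e₁ := cexp (I * k * d)
  set e₂ := cexp (I * k * q)
  calc _ ≤ ‖e₁ / (d : ℂ) ^ 2‖ +
        |k| * (‖(e₁ - e₂) / (d : ℂ)‖ + ‖e₂ * (((r - d) / (d * r) : ℝ) : ℂ)‖) := by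
        refine (norm_sub_le _ _).trans (add_le_add_right ?_ _)
        rw [norm_mul, norm_mul, norm_I, one_mul, norm_real, Real.norm_eq_abs]
        gcongr
        exact norm_add_le _ _
    _ = d⁻¹ ^ 2 + |k| * (‖e₁ - e₂‖ * d⁻¹ + |r - d| * d⁻¹ * r⁻¹) := by
      simp only [e₁, e₂, norm_mul, norm_div, norm_pow, norm_real, norm_exp_I_mul_ofReal_mul_ofReal,
        Real.norm_eq_abs, abs_of_pos hd, abs_of_pos hr, one_mul, inv_pow]
      ring
    _ ≤ (2 / r) ^ 2 + |k| * (|k| * (s ^ 2 / r) * (2 / r) + s * (2 / r) * r⁻¹) := by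
      grw [norm_exp_I_mul_sub_exp_I_mul_le, hinv, hdq, hrs]
    _ = (4 + 2 * |k| * s + 2 * k ^ 2 * s ^ 2) / r ^ 2 := by
      field_simp
      rw [← sq_abs k]
      ring

theorem norm_mul_norm_fderiv_farfieldRemainder_le (k : ℝ) {x y : E} (h : 2 * ‖y‖ < ‖x‖) :
    ‖x‖ * ‖fderiv ℝ (farfieldRemainder k x) y‖ ≤ 4 * (1 + |k| * ‖y‖) ^ 2 / ‖x‖ := by
  have hr : 0 < ‖x‖ := by linarith [norm_nonneg y]
  have hxy : x ≠ y := by rintro rfl; linarith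
  have hd : ‖x‖ - ‖y‖ ≤ ‖x - y‖ := norm_sub_norm_le x y
  have hrd : |‖x‖ - ‖x - y‖| ≤ ‖y‖ := by simpa using abs_norm_sub_norm_le x (x - y)
  have hcoeff := norm_farfieldRemainder_coeff_le k hr (by linarith) hrd
    (norm_mul_abs_norm_sub_sub_inner_normalize_le h.le)
  have hdir : ‖x‖ * ‖NormedSpace.normalize x - NormedSpace.normalize (x - y)‖ ≤ 2 * ‖y‖ := by
    simpa [norm_sub_rev] using norm_mul_norm_normalize_sub_normalize_le (x - y) x
  have hu : ‖NormedSpace.normalize (x - y)‖ = 1 :=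
    NormedSpace.norm_normalize_eq_one_iff.mpr (sub_ne_zero.mpr hxy)
  rw [(hasFDerivAt_farfieldRemainder k hxy).fderiv]
  have hβ : ‖I * k * cexp (I * k * ↑(‖x‖ - inner ℝ (NormedSpace.normalize x) y)) / (‖x‖ : ℂ)‖ =
      |k| / ‖x‖ := by
    rw [norm_div, norm_mul, norm_mul, norm_I, one_mul, norm_real, norm_real,
      norm_exp_I_mul_ofReal_mul_ofReal, Real.norm_eq_abs, mul_one, Real.norm_of_nonneg hr.le]
  grw [norm_innerSL_smulRight_add_le, hcoeff, hu, hβ]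
  calc ‖x‖ * ((4 + 2 * |k| * ‖y‖ + 2 * k ^ 2 * ‖y‖ ^ 2) / ‖x‖ ^ 2 * 1 + |k| / ‖x‖ *
        ‖NormedSpace.normalize x - NormedSpace.normalize (x - y)‖)
      = (4 + 2 * |k| * ‖y‖ + 2 * k ^ 2 * ‖y‖ ^ 2 +
          |k| * (‖x‖ * ‖NormedSpace.normalize x - NormedSpace.normalize (x - y)‖)) / ‖x‖ := by
        field_simp
    _ ≤ (4 + 2 * |k| * ‖y‖ + 2 * k ^ 2 * ‖y‖ ^ 2 + |k| * (2 * ‖y‖)) / ‖x‖ := by grw [hdir]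
    _ ≤ 4 * (1 + |k| * ‖y‖) ^ 2 / ‖x‖ := by
      gcongr
      nlinarith [sq_abs k, abs_nonneg k, norm_nonneg y]

end InnerProductSpace

theorem farfield_asymptotic_gradient_general (k : ℝ)
    (K : Set (EuclideanSpace ℝ (Fin 3))) (hK : IsCompact K) :
    ∀ ε > 0, ∃ R : ℝ, ∀ x : EuclideanSpace ℝ (Fin 3), R ≤ ‖x‖ → ∀ y ∈ K,
      ‖x‖ * ‖fderiv ℝ (fun z : EuclideanSpace ℝ (Fin 3) =>
          Complex.exp (Complex.I * k * ‖x - z‖) / (‖x - z‖ : ℂ) -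
            (Complex.exp (Complex.I * k * ‖x‖) / (‖x‖ : ℂ)) *
              Complex.exp (-Complex.I * k * (inner ℝ (‖x‖⁻¹ • x) z : ℝ))) y‖ < ε := by
  intro ε hε
  obtain ⟨M, hM⟩ := hK.isBounded.exists_norm_le
  set C := 4 * (1 + |k| * M) ^ 2 with hC
  refine ⟨max (2 * M + 1) (C / ε + 1), fun x hx y hy => ?_⟩
  have hyM : ‖y‖ ≤ M := hM y hy
  have hxM : 2 * M + 1 ≤ ‖x‖ := (le_max_left _ _).trans hx
  have hxC : C / ε + 1 ≤ ‖x‖ := (le_max_right _ _).trans hx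
  have hx0 : 0 < ‖x‖ := by linarith [norm_nonneg y]
  calc ‖x‖ * ‖fderiv ℝ (farfieldRemainder k x) y‖ ≤ 4 * (1 + |k| * ‖y‖) ^ 2 / ‖x‖ :=
        norm_mul_norm_fderiv_farfieldRemainder_le k (by linarith)
    _ ≤ C / ‖x‖ := by rw [hC]; gcongr
    _ < ε := by
      rw [div_lt_iff₀ hx0]
      rw [div_add_one hε.ne', div_le_iff₀ hε] at hxC
      linarith

theorem farfield_asymptotic_gradient (k : ℝ) (hk : 0 < k)
    (K : Set (EuclideanSpace ℝ (Fin 3))) (hK : IsCompact K) (hKne : K.Nonempty) :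
    ∀ ε > 0, ∃ R : ℝ, ∀ x : EuclideanSpace ℝ (Fin 3), R ≤ ‖x‖ → ∀ y ∈ K,
      ‖x‖ * ‖fderiv ℝ (fun z : EuclideanSpace ℝ (Fin 3) =>
          Complex.exp (Complex.I * k * ‖x - z‖) / (‖x - z‖ : ℂ) -
            (Complex.exp (Complex.I * k * ‖x‖) / (‖x‖ : ℂ)) *
              Complex.exp (-Complex.I * k * (inner ℝ (‖x‖⁻¹ • x) z : ℝ))) y‖ < ε :=
  farfield_asymptotic_gradient_general k K hK
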